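/- Consider the Game of Graph Nim on the disjoint union of a triangle (edges AB, BC, CA) and a single edge DE. If the positive edge weights satisfy min{w(AB), w(BC), w(CA)} ≤ w(DE) ≤ w(AB) + w(BC) + w(CA) − min{w(AB), w(BC), w(CA)}, then the configuration is a winning position for the first player. -/
import Mathlib


namespace GraphNim

variable {V E : Type} [Fintype E]

/-- A legal move in the Game of Graph Nim: choose a vertex `v` and weakly decrease
the weights of edges incident to `v` (all other edges unchanged), strictly
decreasing the total weight. -/
def Move (inc : V → E → Prop) (w w' : E → ℕ) : Prop :=
  ∃ v : V, (∀ e, w' e ≤ w e) ∧ (∀ e, ¬ inc v e → w' e = w e) ∧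
    (∑ e, w' e) < (∑ e, w e)

/-- A configuration is losing for the player to move: every legal move leads to a
non-losing configuration (the all-zero configuration is vacuously losing). -/
def Losing (inc : V → E → Prop) (w : E → ℕ) : Prop :=
  ∀ w', Move inc w w' → ¬ Losing inc w'
termination_by ∑ e, w e
decreasing_by
  rename_i h
  obtain ⟨v, _, _, h3⟩ := h
  exact h3

/-- A configuration is winning for the player to move: some legal move leads to a
losing configuration. -/
def Winning (inc : V → E → Prop) (w : E → ℕ) : Prop :=
  ∃ w', Move inc w w' ∧ Losing inc w'

end GraphNim

open GraphNim

/-- Endpoints of the edges of the graph `G₄` (triangle `ABC` plus a disjoint edge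
`DE`): vertices `A = 0, B = 1, C = 2, D = 3, E = 4`, edges `AB = 0, BC = 1,
CA = 2, DE = 3`. -/
def g4Ends : Fin 4 → Fin 5 × Fin 5
  | 0 => (0, 1)
  | 1 => (1, 2)
  | 2 => (2, 0)
  | 3 => (3, 4)

def g4Inc (v : Fin 5) (e : Fin 4) : Prop := (g4Ends e).1 = v ∨ (g4Ends e).2 = v

set_option linter.unnecessarySeqFocus false

section Aux

lemma g4_losing_aux2 : ∀ n x y d : ℕ, x + y + d ≤ n → x + y = d →
    Losing g4Inc ![x, y, 0, d] := by
  intro n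
  induction n with
  | zero =>
    intro x y d hn hd
    rw [Losing]
    rintro w' ⟨v, h1, h2, h3⟩ _
    have hx : x = 0 := by omega
    have hy : y = 0 := by omega
    have hdd : d = 0 := by omega
    subst hx hy hdd
    simp [Fin.sum_univ_four] at h3
  | succ n ih =>
    intro x y d hn hd
    rw [Losing]
    rintro w' ⟨v, h1, h2, h3⟩ hL
    rw [Losing] at hL
    have e0 := h1 0
    have e1 := h1 1
    have e2 := h1 2
    have e3 := h1 3
    simp at e0 e1 e2 e3
    rw [Fin.sum_univ_four, Fin.sum_univ_four] at h3
    simp at h3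
    have key : (w' 2 = 0 ∧ w' 3 = d ∧ w' 0 + w' 1 < d) ∨
        (w' 0 = x ∧ w' 1 = y ∧ w' 2 = 0 ∧ w' 3 < d) := by
      fin_cases v
      · have u1 : w' 1 = y := by have := h2 1 (by unfold g4Inc g4Ends; decide); simpa using this
        have u3 : w' 3 = d := by have := h2 3 (by unfold g4Inc g4Ends; decide); simpa using this
        left; omega
      · have u2 : w' 2 = 0 := by have := h2 2 (by unfold g4Inc g4Ends; decide); simpa using this
        have u3 : w' 3 = d := by have := h2 3 (by unfold g4Inc g4Ends; decide); simpa using this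
        left; omega
      · have u0 : w' 0 = x := by have := h2 0 (by unfold g4Inc g4Ends; decide); simpa using this
        have u3 : w' 3 = d := by have := h2 3 (by unfold g4Inc g4Ends; decide); simpa using this
        left; omega
      · have u0 : w' 0 = x := by have := h2 0 (by unfold g4Inc g4Ends; decide); simpa using this
        have u1 : w' 1 = y := by have := h2 1 (by unfold g4Inc g4Ends; decide); simpa using this
        have u2 : w' 2 = 0 := by have := h2 2 (by unfold g4Inc g4Ends; decide); simpa using this
        right; omega
      · have u0 : w' 0 = x := by have := h2 0 (by unfold g4Inc g4Ends; decide); simpa using this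
        have u1 : w' 1 = y := by have := h2 1 (by unfold g4Inc g4Ends; decide); simpa using this
        have u2 : w' 2 = 0 := by have := h2 2 (by unfold g4Inc g4Ends; decide); simpa using this
        right; omega
    rcases key with ⟨k2, k3, klt⟩ | ⟨k0, k1, k2, k3⟩
    · refine hL ![w' 0, w' 1, 0, w' 0 + w' 1] ⟨3, ?_, ?_, ?_⟩
          (ih (w' 0) (w' 1) (w' 0 + w' 1) (by omega) rfl)
      · intro e; fin_cases e <;> simp <;> omega
      · intro e he; fin_cases e <;> simp at he ⊢ <;>
          first
          | omega
          | exact absurd (by unfold g4Inc g4Ends; decide) he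
      · rw [Fin.sum_univ_four, Fin.sum_univ_four]; simp; omega
    · refine hL ![min x (w' 3), w' 3 - min x (w' 3), 0, w' 3] ⟨1, ?_, ?_, ?_⟩
          (ih _ _ _ (by omega) (by omega))
      · intro e; fin_cases e <;> simp <;> omega
      · intro e he; fin_cases e <;> simp at he ⊢ <;>
          first
          | omega
          | exact absurd (by unfold g4Inc g4Ends; decide) he
      · rw [Fin.sum_univ_four, Fin.sum_univ_four]; simp; omega

lemma g4_losing_aux0 : ∀ n x y d : ℕ, x + y + d ≤ n → x + y = d →
    Losing g4Inc ![0, x, y, d] := by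
  intro n
  induction n with
  | zero =>
    intro x y d hn hd
    rw [Losing]
    rintro w' ⟨v, h1, h2, h3⟩ _
    have hx : x = 0 := by omega
    have hy : y = 0 := by omega
    have hdd : d = 0 := by omega
    subst hx hy hdd
    simp [Fin.sum_univ_four] at h3
  | succ n ih =>
    intro x y d hn hd
    rw [Losing]
    rintro w' ⟨v, h1, h2, h3⟩ hL
    rw [Losing] at hL
    have e0 := h1 0
    have e1 := h1 1
    have e2 := h1 2
    have e3 := h1 3
    simp at e0 e1 e2 e3
    rw [Fin.sum_univ_four, Fin.sum_univ_four] at h3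
    simp at h3
    have key : (w' 0 = 0 ∧ w' 3 = d ∧ w' 1 + w' 2 < d) ∨
        (w' 0 = 0 ∧ w' 1 = x ∧ w' 2 = y ∧ w' 3 < d) := by
      fin_cases v
      · have u1 : w' 1 = x := by have := h2 1 (by unfold g4Inc g4Ends; decide); simpa using this
        have u3 : w' 3 = d := by have := h2 3 (by unfold g4Inc g4Ends; decide); simpa using this
        left; omega
      · have u2 : w' 2 = y := by have := h2 2 (by unfold g4Inc g4Ends; decide); simpa using this
        have u3 : w' 3 = d := by have := h2 3 (by unfold g4Inc g4Ends; decide); simpa using this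
        left; omega
      · have u0 : w' 0 = 0 := by have := h2 0 (by unfold g4Inc g4Ends; decide); simpa using this
        have u3 : w' 3 = d := by have := h2 3 (by unfold g4Inc g4Ends; decide); simpa using this
        left; omega
      · have u0 : w' 0 = 0 := by have := h2 0 (by unfold g4Inc g4Ends; decide); simpa using this
        have u1 : w' 1 = x := by have := h2 1 (by unfold g4Inc g4Ends; decide); simpa using this
        have u2 : w' 2 = y := by have := h2 2 (by unfold g4Inc g4Ends; decide); simpa using this
        right; omega
      · have u0 : w' 0 = 0 := by have := h2 0 (by unfold g4Inc g4Ends; decide); simpa using this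
        have u1 : w' 1 = x := by have := h2 1 (by unfold g4Inc g4Ends; decide); simpa using this
        have u2 : w' 2 = y := by have := h2 2 (by unfold g4Inc g4Ends; decide); simpa using this
        right; omega
    rcases key with ⟨k0, k3, klt⟩ | ⟨k0, k1, k2, k3⟩
    · refine hL ![0, w' 1, w' 2, w' 1 + w' 2] ⟨3, ?_, ?_, ?_⟩
          (ih (w' 1) (w' 2) (w' 1 + w' 2) (by omega) rfl)
      · intro e; fin_cases e <;> simp <;> omega
      · intro e he; fin_cases e <;> simp at he ⊢ <;>
          first
          | omega
          | exact absurd (by unfold g4Inc g4Ends; decide) he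
      · rw [Fin.sum_univ_four, Fin.sum_univ_four]; simp; omega
    · refine hL ![0, min x (w' 3), w' 3 - min x (w' 3), w' 3] ⟨2, ?_, ?_, ?_⟩
          (ih _ _ _ (by omega) (by omega))
      · intro e; fin_cases e <;> simp <;> omega
      · intro e he; fin_cases e <;> simp at he ⊢ <;>
          first
          | omega
          | exact absurd (by unfold g4Inc g4Ends; decide) he
      · rw [Fin.sum_univ_four, Fin.sum_univ_four]; simp; omega

lemma g4_losing_aux1 : ∀ n x y d : ℕ, x + y + d ≤ n → x + y = d →
    Losing g4Inc ![x, 0, y, d] := by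
  intro n
  induction n with
  | zero =>
    intro x y d hn hd
    rw [Losing]
    rintro w' ⟨v, h1, h2, h3⟩ _
    have hx : x = 0 := by omega
    have hy : y = 0 := by omega
    have hdd : d = 0 := by omega
    subst hx hy hdd
    simp [Fin.sum_univ_four] at h3
  | succ n ih =>
    intro x y d hn hd
    rw [Losing]
    rintro w' ⟨v, h1, h2, h3⟩ hL
    rw [Losing] at hL
    have e0 := h1 0
    have e1 := h1 1
    have e2 := h1 2
    have e3 := h1 3
    simp at e0 e1 e2 e3
    rw [Fin.sum_univ_four, Fin.sum_univ_four] at h3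
    simp at h3
    have key : (w' 1 = 0 ∧ w' 3 = d ∧ w' 0 + w' 2 < d) ∨
        (w' 0 = x ∧ w' 1 = 0 ∧ w' 2 = y ∧ w' 3 < d) := by
      fin_cases v
      · have u1 : w' 1 = 0 := by have := h2 1 (by unfold g4Inc g4Ends; decide); simpa using this
        have u3 : w' 3 = d := by have := h2 3 (by unfold g4Inc g4Ends; decide); simpa using this
        left; omega
      · have u2 : w' 2 = y := by have := h2 2 (by unfold g4Inc g4Ends; decide); simpa using this
        have u3 : w' 3 = d := by have := h2 3 (by unfold g4Inc g4Ends; decide); simpa using this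
        left; omega
      · have u0 : w' 0 = x := by have := h2 0 (by unfold g4Inc g4Ends; decide); simpa using this
        have u3 : w' 3 = d := by have := h2 3 (by unfold g4Inc g4Ends; decide); simpa using this
        left; omega
      · have u0 : w' 0 = x := by have := h2 0 (by unfold g4Inc g4Ends; decide); simpa using this
        have u1 : w' 1 = 0 := by have := h2 1 (by unfold g4Inc g4Ends; decide); simpa using this
        have u2 : w' 2 = y := by have := h2 2 (by unfold g4Inc g4Ends; decide); simpa using this
        right; omega
      · have u0 : w' 0 = x := by have := h2 0 (by unfold g4Inc g4Ends; decide); simpa using this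
        have u1 : w' 1 = 0 := by have := h2 1 (by unfold g4Inc g4Ends; decide); simpa using this
        have u2 : w' 2 = y := by have := h2 2 (by unfold g4Inc g4Ends; decide); simpa using this
        right; omega
    rcases key with ⟨k1, k3, klt⟩ | ⟨k0, k1, k2, k3⟩
    · refine hL ![w' 0, 0, w' 2, w' 0 + w' 2] ⟨3, ?_, ?_, ?_⟩
          (ih (w' 0) (w' 2) (w' 0 + w' 2) (by omega) rfl)
      · intro e; fin_cases e <;> simp <;> omega
      · intro e he; fin_cases e <;> simp at he ⊢ <;>
          first
          | omega
          | exact absurd (by unfold g4Inc g4Ends; decide) he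
      · rw [Fin.sum_univ_four, Fin.sum_univ_four]; simp; omega
    · refine hL ![min x (w' 3), 0, w' 3 - min x (w' 3), w' 3] ⟨0, ?_, ?_, ?_⟩
          (ih _ _ _ (by omega) (by omega))
      · intro e; fin_cases e <;> simp <;> omega
      · intro e he; fin_cases e <;> simp at he ⊢ <;>
          first
          | omega
          | exact absurd (by unfold g4Inc g4Ends; decide) he
      · rw [Fin.sum_univ_four, Fin.sum_univ_four]; simp; omega

end Aux

/-- On `G₄`, if `min{w(AB), w(BC), w(CA)} ≤ w(DE) ≤ w(AB)+w(BC)+w(CA) − min{…}`,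
the configuration (with positive weights) is winning for the first player. -/
theorem g4_winning_between (w : Fin 4 → ℕ) (hpos : ∀ e, 0 < w e)
    (hlo : min (w 0) (min (w 1) (w 2)) ≤ w 3)
    (hhi : w 3 ≤ w 0 + w 1 + w 2 - min (w 0) (min (w 1) (w 2))) :
    Winning g4Inc w := by
  have p0 := hpos 0
  have p1 := hpos 1
  have p2 := hpos 2
  have hcases : (min (w 0) (w 1) ≤ w 3 ∧ w 3 ≤ w 0 + w 1) ∨
      (min (w 1) (w 2) ≤ w 3 ∧ w 3 ≤ w 1 + w 2) ∨
      (min (w 0) (w 2) ≤ w 3 ∧ w 3 ≤ w 0 + w 2) := by omega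
  unfold Winning
  rcases hcases with ⟨hl, hh⟩ | ⟨hl, hh⟩ | ⟨hl, hh⟩
  · -- zero edge 2 (CA)
    rcases le_or_gt (w 0) (w 3) with hc | hc
    · refine ⟨![w 0, w 3 - w 0, 0, w 3], ⟨2, ?_, ?_, ?_⟩,
        g4_losing_aux2 (2 * w 3) _ _ _ (by omega) (by omega)⟩
      · intro e; fin_cases e <;> simp <;> omega
      · intro e he; fin_cases e <;> simp at he ⊢ <;>
          first
          | rfl
          | exact absurd (by unfold g4Inc g4Ends; decide) he
      · rw [Fin.sum_univ_four, Fin.sum_univ_four]; simp; omega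
    · have hw1 : w 1 ≤ w 3 := by omega
      refine ⟨![w 3 - w 1, w 1, 0, w 3], ⟨0, ?_, ?_, ?_⟩,
        g4_losing_aux2 (2 * w 3) _ _ _ (by omega) (by omega)⟩
      · intro e; fin_cases e <;> simp <;> omega
      · intro e he; fin_cases e <;> simp at he ⊢ <;>
          first
          | rfl
          | exact absurd (by unfold g4Inc g4Ends; decide) he
      · rw [Fin.sum_univ_four, Fin.sum_univ_four]; simp; omega
  · -- zero edge 0 (AB)
    rcases le_or_gt (w 1) (w 3) with hc | hc
    · refine ⟨![0, w 1, w 3 - w 1, w 3], ⟨0, ?_, ?_, ?_⟩,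
        g4_losing_aux0 (2 * w 3) _ _ _ (by omega) (by omega)⟩
      · intro e; fin_cases e <;> simp <;> omega
      · intro e he; fin_cases e <;> simp at he ⊢ <;>
          first
          | rfl
          | exact absurd (by unfold g4Inc g4Ends; decide) he
      · rw [Fin.sum_univ_four, Fin.sum_univ_four]; simp; omega
    · have hw2 : w 2 ≤ w 3 := by omega
      refine ⟨![0, w 3 - w 2, w 2, w 3], ⟨1, ?_, ?_, ?_⟩,
        g4_losing_aux0 (2 * w 3) _ _ _ (by omega) (by omega)⟩
      · intro e; fin_cases e <;> simp <;> omega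
      · intro e he; fin_cases e <;> simp at he ⊢ <;>
          first
          | rfl
          | exact absurd (by unfold g4Inc g4Ends; decide) he
      · rw [Fin.sum_univ_four, Fin.sum_univ_four]; simp; omega
  · -- zero edge 1 (BC)
    rcases le_or_gt (w 0) (w 3) with hc | hc
    · refine ⟨![w 0, 0, w 3 - w 0, w 3], ⟨2, ?_, ?_, ?_⟩,
        g4_losing_aux1 (2 * w 3) _ _ _ (by omega) (by omega)⟩
      · intro e; fin_cases e <;> simp <;> omega
      · intro e he; fin_cases e <;> simp at he ⊢ <;>
          first
          | rfl
          | exact absurd (by unfold g4Inc g4Ends; decide) he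
      · rw [Fin.sum_univ_four, Fin.sum_univ_four]; simp; omega
    · have hw2 : w 2 ≤ w 3 := by omega
      refine ⟨![w 3 - w 2, 0, w 2, w 3], ⟨1, ?_, ?_, ?_⟩,
        g4_losing_aux1 (2 * w 3) _ _ _ (by omega) (by omega)⟩
      · intro e; fin_cases e <;> simp <;> omega
      · intro e he; fin_cases e <;> simp at he ⊢ <;>
          first
          | rfl
          | exact absurd (by unfold g4Inc g4Ends; decide) he
      · rw [Fin.sum_univ_four, Fin.sum_univ_four]; simp; omega
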